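/- arXiv:1910.03332 — 9 statements merged into one kernel-verified Lean document; each statement's English description precedes it below -/
import Mathlib

section
/- Let G be a simple graph on a finite vertex type V with edge weights w : Sym2 V → ℝ, and let F be a minimum spanning forest of G. Then for every real threshold t and all vertices u, v ∈ V: u and v are reachable in the spanning subgraph of G consisting of the edges of G of weight at most t if and only if u and v are reachable in the spanning subgraph consisting of the edges of F of weight at most t. -/
/-
It suffices that the ends of every edge `ab` of `G_{≤t}` are connected in `F_{≤t}`. Otherwise the
`F`-path from `a` to `b` leaves the `F_{≤t}`-component of `a` through an edge `xy` of weight `> t`.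
Since `F` is acyclic, deleting `xy` separates `a` from `b`, so exchanging `xy` for `ab` gives
another spanning forest, strictly lighter than `F`.
-/

/-- `F` is a spanning forest of `H`: a spanning subgraph (edges a subset of those of `H`)
that is acyclic and has the same reachability relation as `H`. -/
def IsSpanningForest {V : Type*} (H F : SimpleGraph V) : Prop :=
  F ≤ H ∧ F.IsAcyclic ∧ ∀ u v : V, F.Reachable u v ↔ H.Reachable u v

/-- The total weight of the edges of a graph. -/
noncomputable def totalWeight {V : Type*} (w : Sym2 V → ℝ) (F : SimpleGraph V) : ℝ :=
  ∑ᶠ e ∈ F.edgeSet, w e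

/-- `F` is a minimum spanning forest of `H` with respect to the weights `w`. -/
def IsMSF {V : Type*} (w : Sym2 V → ℝ) (H F : SimpleGraph V) : Prop :=
  IsSpanningForest H F ∧
    ∀ F' : SimpleGraph V, IsSpanningForest H F' → totalWeight w F ≤ totalWeight w F'

/-- The spanning subgraph `G_{≤ t}` of `G` consisting of the edges of `G` of weight at most `t`. -/
def leSub {V : Type*} (w : Sym2 V → ℝ) (G : SimpleGraph V) (t : ℝ) : SimpleGraph V :=
  SimpleGraph.fromEdgeSet {e ∈ G.edgeSet | w e ≤ t}

open SimpleGraph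

namespace SimpleGraph

variable {V : Type*} {G H : SimpleGraph V}

lemma reachable_le_reachable_of_adj (h : ∀ ⦃a b : V⦄, G.Adj a b → H.Reachable a b) :
    G.Reachable ≤ H.Reachable := fun u v huv ↦
  Relation.reflTransGen_le_of_equivalence_of_le H.reachable_is_equivalence h u v
    ((reachable_iff_reflTransGen u v).mp huv)

lemma reachable_deleteEdges_or {u x y : V} (hux : G.Reachable u x) :
    (G.deleteEdges {s(x, y)}).Reachable u x ∨ (G.deleteEdges {s(x, y)}).Reachable u y := by
  obtain ⟨p⟩ := hux
  induction p with
  | nil => exact Or.inl .rfl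
  | @cons u u' x hadj _ ih =>
    by_cases he : s(u, u') = s(x, y)
    · rcases Sym2.eq_iff.mp he with ⟨rfl, -⟩ | ⟨rfl, -⟩
      · exact Or.inl .rfl
      · exact Or.inr .rfl
    · have hD : (G.deleteEdges {s(x, y)}).Adj u u' := by simp [hadj, he]
      exact ih.imp hD.reachable.trans hD.reachable.trans

lemma reachable_le_of_deleteEdges_le {x y : V} (hle : G.deleteEdges {s(x, y)} ≤ H)
    (hxy : H.Reachable x y) : G.Reachable ≤ H.Reachable :=
  reachable_le_reachable_of_adj fun p q hpq ↦ by
    by_cases he : s(p, q) = s(x, y)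
    · rcases Sym2.eq_iff.mp he with ⟨rfl, rfl⟩ | ⟨rfl, rfl⟩
      · exact hxy
      · exact hxy.symm
    · exact (hle (by simp [hpq, he])).reachable

lemma IsAcyclic.not_reachable_deleteEdges_of_mem_edges (hG : G.IsAcyclic) {a b : V}
    {p : G.Walk a b} (hp : p.IsPath) {e : Sym2 V} (he : e ∈ p.edges) :
    ¬(G.deleteEdges {e}).Reachable a b := by
  rintro hr
  obtain ⟨q, hq⟩ := hr.exists_isPath
  have hpq := congrArg (fun r : G.Path a b ↦ (r : G.Walk a b).edges)
    ((hG.subsingleton_path a b).elim ⟨p, hp⟩ ⟨q.mapLe (deleteEdges_le _), hq.mapLe _⟩)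
  simp only [Walk.edges_mapLe_eq_edges] at hpq
  rw [hpq] at he
  simpa using q.edges_subset_edgeSet he

end SimpleGraph

section

variable {V : Type*} {w : Sym2 V → ℝ} {G F : SimpleGraph V} {t : ℝ}

@[simp]
lemma leSub_adj {a b : V} : (leSub w G t).Adj a b ↔ G.Adj a b ∧ w s(a, b) ≤ t := by
  simp only [leSub, fromEdgeSet_adj, Set.mem_ofPred_eq, mem_edgeSet]
  exact ⟨fun h ↦ h.1, fun h ↦ ⟨h, h.1.ne⟩⟩

lemma leSub_le : leSub w G t ≤ G := fun _ _ h ↦ (leSub_adj.mp h).1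

lemma leSub_mono (h : F ≤ G) : leSub w F t ≤ leSub w G t := fun _ _ hab ↦
  leSub_adj.mpr ((leSub_adj.mp hab).imp_left (h ·))

lemma totalWeight_eq_totalWeight_deleteEdges_add [Finite V] {e : Sym2 V} (he : e ∈ F.edgeSet) :
    totalWeight w F = totalWeight w (F.deleteEdges {e}) + w e := by
  rw [totalWeight, totalWeight, edgeSet_deleteEdges, ← Set.insert_sdiff_self_of_mem he,
    finsum_mem_insert _ (by simp) (Set.toFinite _), Set.insert_sdiff_self_of_mem he, add_comm]

lemma totalWeight_sup_edge [Finite V] {a b : V} (hab : a ≠ b) (h : ¬F.Adj a b) :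
    totalWeight w (F ⊔ edge a b) = totalWeight w F + w s(a, b) := by
  rw [totalWeight, totalWeight, edgeSet_sup, edgeSet_edge_of_ne hab, Set.union_singleton,
    finsum_mem_insert _ (show s(a, b) ∉ F.edgeSet from h) (Set.toFinite _), add_comm]

lemma IsSpanningForest.exchange (hF : IsSpanningForest G F) {a b x y : V} (hab : G.Adj a b)
    (hax : F.Reachable a x) (hD : ¬(F.deleteEdges {s(x, y)}).Reachable a b) :
    IsSpanningForest G (F.deleteEdges {s(x, y)} ⊔ edge a b) := by
  obtain ⟨hFG, hFac, hFreach⟩ := hF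
  set D := F.deleteEdges {s(x, y)}
  have hDF' : D ≤ D ⊔ edge a b := le_sup_left
  have hab' : (D ⊔ edge a b).Reachable a b := Adj.reachable (by simp [edge_adj, hab.ne])
  have hxy : (D ⊔ edge a b).Reachable x y := by
    have hbx : F.Reachable b x := ((hFreach a b).mpr hab.reachable).symm.trans hax
    rcases reachable_deleteEdges_or hax with hax | hay <;>
      rcases reachable_deleteEdges_or hbx with hbx | hby
    · exact absurd (hax.trans hbx.symm) hD
    · exact ((hax.symm.mono hDF').trans hab').trans (hby.mono hDF')
    · exact ((hbx.symm.mono hDF').trans hab'.symm).trans (hay.mono hDF')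
    · exact absurd (hay.trans hby.symm) hD
  have hF'G : D ⊔ edge a b ≤ G :=
    sup_le ((deleteEdges_le _).trans hFG) ((edge_le_iff G).mpr (.inr hab))
  refine ⟨hF'G, (hFac.anti (deleteEdges_le _)).sup_edge_of_not_reachable hD, fun u v ↦
    ⟨(·.mono hF'G), fun h ↦
      reachable_le_of_deleteEdges_le hDF' hxy u v ((hFreach u v).mpr h)⟩⟩

lemma IsMSF.weight_le_of_exchange [Finite V] (hF : IsMSF w G F) {a b x y : V} (hab : G.Adj a b)
    (hxy : F.Adj x y) (hax : F.Reachable a x) (hD : ¬(F.deleteEdges {s(x, y)}).Reachable a b) :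
    w s(x, y) ≤ w s(a, b) := by
  have hle := hF.2 _ (hF.1.exchange hab hax hD)
  rw [totalWeight_sup_edge hab.ne fun h ↦ hD h.reachable,
    totalWeight_eq_totalWeight_deleteEdges_add (show s(x, y) ∈ F.edgeSet from hxy)] at hle
  linarith

lemma IsMSF.reachable_leSub_of_adj [Finite V] (hF : IsMSF w G F) {a b : V} (hab : G.Adj a b)
    (hw : w s(a, b) ≤ t) : (leSub w F t).Reachable a b := by
  by_contra hnr
  obtain ⟨p, hp⟩ := ((hF.1.2.2 a b).mpr hab.reachable).exists_isPath
  obtain ⟨d, hd, hx, hy⟩ :=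
    p.exists_boundary_dart {v | (leSub w F t).Reachable a v} (Reachable.refl a) hnr
  have hwd : t < w d.edge := by
    by_contra! h
    exact hy (hx.trans (leSub_adj.mpr ⟨d.adj, h⟩).reachable)
  have hle := hF.weight_le_of_exchange hab d.adj (hx.mono leSub_le)
    (hF.1.2.1.not_reachable_deleteEdges_of_mem_edges hp (List.mem_map_of_mem hd))
  exact (hwd.trans_le hle).not_ge hw

end

theorem msf_threshold_reachable {V : Type*} [Fintype V] (G : SimpleGraph V) (w : Sym2 V → ℝ)
    (F : SimpleGraph V) (hF : IsMSF w G F) (t : ℝ) (u v : V) :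
    (leSub w G t).Reachable u v ↔ (leSub w F t).Reachable u v :=
  ⟨fun h ↦ reachable_le_reachable_of_adj
      (fun _ _ hab ↦ (leSub_adj.mp hab).elim hF.reachable_leSub_of_adj) u v h,
    (·.mono (leSub_mono hF.1.1))⟩
end

section
/- Let t be a binary tree (built inductively from leaves and internal nodes having exactly two children) such that for every internal node of t with subtrees l and r, the number of leaves of l is at most twice the number of leaves of r and the number of leaves of r is at most twice the number of leaves of l. Then 3^{height(t)} ≤ 2^{height(t)} · numLeaves(t), where height is the maximal number of edges on a root-to-leaf path and numLeaves is the number of leaves. (Thus a binary tree satisfying the sibling-balance invariant of the scapegoat tree has height O(log of the number of leaves).) -/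
/-- Binary trees: a leaf, or an internal node with exactly two children. -/
inductive BinTree : Type
  | leaf : BinTree
  | node : BinTree → BinTree → BinTree

namespace BinTree

/-- The number of leaves of a binary tree. -/
def numLeaves : BinTree → ℕ
  | leaf => 1
  | node l r => numLeaves l + numLeaves r

/-- The height of a binary tree: the maximal number of edges on a root-to-leaf path. -/
def height : BinTree → ℕ
  | leaf => 0
  | node l r => 1 + max (height l) (height r)

/-- The sibling-balance invariant of the scapegoat tree: for every internal node with
subtrees `l` and `r`, `numLeaves l ≤ 2 * numLeaves r` and `numLeaves r ≤ 2 * numLeaves l`. -/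
def Balanced : BinTree → Prop
  | leaf => True
  | node l r =>
      numLeaves l ≤ 2 * numLeaves r ∧ numLeaves r ≤ 2 * numLeaves l ∧ Balanced l ∧ Balanced r

end BinTree

theorem balanced_binTree_height (t : BinTree) (ht : BinTree.Balanced t) :
    3 ^ t.height ≤ 2 ^ t.height * t.numLeaves := by
  induction t with
  | leaf => simp [BinTree.height, BinTree.numLeaves]
  | node l r ihl ihr =>
    obtain ⟨h1, h2, bl, br⟩ := ht
    have ihl := ihl bl
    have ihr := ihr br
    simp only [BinTree.height, BinTree.numLeaves]
    rcases le_total l.height r.height with h | h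
    · rw [max_eq_right h]
      calc 3 ^ (1 + r.height) = 3 * 3 ^ r.height := by ring
        _ ≤ 3 * (2 ^ r.height * r.numLeaves) := by
            exact Nat.mul_le_mul_left _ ihr
        _ = 2 ^ r.height * (3 * r.numLeaves) := by ring
        _ ≤ 2 ^ r.height * (2 * (l.numLeaves + r.numLeaves)) := by
            apply Nat.mul_le_mul_left; omega
        _ = 2 ^ (1 + r.height) * (l.numLeaves + r.numLeaves) := by
            rw [pow_add]; ring
    · rw [max_eq_left h]
      calc 3 ^ (1 + l.height) = 3 * 3 ^ l.height := by ring
        _ ≤ 3 * (2 ^ l.height * l.numLeaves) := by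
            exact Nat.mul_le_mul_left _ ihl
        _ = 2 ^ l.height * (3 * l.numLeaves) := by ring
        _ ≤ 2 ^ l.height * (2 * (l.numLeaves + r.numLeaves)) := by
            apply Nat.mul_le_mul_left; omega
        _ = 2 ^ (1 + l.height) * (l.numLeaves + r.numLeaves) := by
            rw [pow_add]; ring
end

section
/- Fix n ∈ ℕ and boolean vectors m, v : Fin n → Bool. Let G be the simple graph on the vertex type (Fin n) ⊕ Bool, where a = inr false, b = inr true, and u_j = inl j for j : Fin n, with adjacency given by: a is adjacent to b; a is adjacent to u_j iff v j = true; u_j is adjacent to b iff m j = true; and there are no other edges. Then G is acyclic (contains no cycle) if and only if for every j : Fin n it is not the case that both v j = true and m j = true. (Equivalently, G contains a cycle iff the boolean inner product of m and v is 1.) -/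
/-!
If `v j` and `m j` both hold, then `a`, `u_j`, `b` form a triangle. Otherwise every `u_j` has at
most one neighbour, so no cycle passes through it; but a cycle has three distinct vertices, so it
cannot stay inside `{a, b}`.
-/

namespace SimpleGraph

variable {V : Type*} {G : SimpleGraph V}

lemma IsAcyclic.cliqueFree_three (hG : G.IsAcyclic) : G.CliqueFree 3 := by
  classical
  intro s hs
  obtain ⟨a, b, c, hab, hac, hbc, -⟩ := is3Clique_iff.mp hs
  refine hG (.cons hab (.cons hbc (.cons hac.symm .nil))) ?_
  rw [Walk.cons_isCycle_iff]
  simp [Walk.isPath_def, hab.ne, hac.ne, hbc.ne, hab.ne.symm, hac.ne.symm]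

namespace Walk

variable {u w : V} {c : G.Walk u u}

lemma IsCycle.notMem_support_of_subsingleton_neighborSet (hc : c.IsCycle)
    (hw : (G.neighborSet w).Subsingleton) : w ∉ c.support := by
  classical
  intro hmem
  have hc' := hc.rotate hmem
  exact hc'.snd_ne_penultimate <| hw ((c.rotate w hmem).adj_snd hc'.not_nil)
    ((c.rotate w hmem).adj_penultimate hc'.not_nil).symm

lemma IsCycle.exists_mem_support_ne_ne (hc : c.IsCycle) (x y : V) :
    ∃ w ∈ c.support, w ≠ x ∧ w ≠ y := by
  have hsnd : c.snd ≠ u := (c.adj_snd hc.not_nil).ne.symm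
  have hpen : c.penultimate ≠ u := (c.adj_penultimate hc.not_nil).ne
  have hsp := hc.snd_ne_penultimate
  by_contra! h
  have hu := h u c.start_mem_support
  have hs := h c.snd (c.getVert_mem_support 1)
  have ht := h c.penultimate (c.getVert_mem_support _)
  generalize c.snd = s, c.penultimate = t at *
  clear h hc
  grind (splitImp := true)

end Walk

end SimpleGraph

open SimpleGraph

/-- OMv gadget for fully retroactive MSF: same gadget as for connectivity together with the
edge `{a, b}`. The graph is acyclic iff the boolean inner product of `m` and `v` is `0`. -/
theorem omv_msf_gadget_acyclic (n : ℕ) (m v : Fin n → Bool)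
    (G : SimpleGraph (Fin n ⊕ Bool))
    (hG : ∀ x y : Fin n ⊕ Bool, G.Adj x y ↔
      ((x = Sum.inr false ∧ y = Sum.inr true) ∨ (x = Sum.inr true ∧ y = Sum.inr false)) ∨
      (∃ j : Fin n, v j = true ∧
        ((x = Sum.inr false ∧ y = Sum.inl j) ∨ (x = Sum.inl j ∧ y = Sum.inr false))) ∨
      (∃ j : Fin n, m j = true ∧
        ((x = Sum.inl j ∧ y = Sum.inr true) ∨ (x = Sum.inr true ∧ y = Sum.inl j)))) :
    G.IsAcyclic ↔ ∀ j : Fin n, ¬(v j = true ∧ m j = true) := by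
  have hnbr : ∀ j y, G.Adj (Sum.inl j) y →
      (v j = true ∧ y = Sum.inr false) ∨ (m j = true ∧ y = Sum.inr true) := by
    intro j y hy
    rw [hG] at hy
    aesop
  constructor
  · rintro hA j ⟨hv, hm⟩
    exact hA.cliqueFree_three {Sum.inr false, Sum.inl j, Sum.inr true} <|
      is3Clique_triple_iff.mpr ⟨by simp [hG, hv], by simp [hG], by simp [hG, hm]⟩
  · intro h u c hc
    obtain ⟨w, hw, ha, hb⟩ := hc.exists_mem_support_ne_ne (Sum.inr false) (Sum.inr true)
    obtain j | (_ | _) := w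
    · refine hc.notMem_support_of_subsingleton_neighborSet ?_ hw
      intro x hx y hy
      rcases hnbr j x hx with ⟨hv, rfl⟩ | ⟨hm, rfl⟩ <;>
        rcases hnbr j y hy with ⟨hv', rfl⟩ | ⟨hm', rfl⟩ <;> simp_all
    · exact ha rfl
    · exact hb rfl
end

section
/- Fix n ∈ ℕ and boolean vectors m, v : Fin n → Bool. Let G be the simple graph on the vertex type Fin n × Fin 3, writing a_j = (j,0), u_j = (j,1), b_j = (j,2), with adjacency given by: a_j is adjacent to u_j iff v j = true; u_j is adjacent to b_j iff m j = true; and there are no other edges. Then every maximal matching M of G (a matching that is not properly contained in any other matching of G) has exactly |{j : v j = true}| + |{j : m j = true}| − |{j : v j = true ∧ m j = true}| edges. In particular, every maximal matching of G has exactly |{j : v j = true}| + |{j : m j = true}| edges if and only if there is no j with v j = true and m j = true. -/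
/-!
The gadget is a disjoint union of stars `a j - u j - b j` (with some edges missing) centred at the
`u j`. Every edge has exactly one endpoint among the centres, so a matching has as many edges as it
covers centres. A maximal matching is a vertex cover, and the only possible partner of a leaf is its
centre, so a maximal matching covers every non-isolated centre `u j`, i.e. those with
`v j ∨ m j`. Inclusion–exclusion turns `|{j | v j ∨ m j}|` into the stated count.
-/

namespace SimpleGraph.Subgraph

variable {V : Type*} {G : SimpleGraph V} {M : G.Subgraph}

theorem exists_isMatching_maximal [Finite V] :
    ∃ M : G.Subgraph, M.IsMatching ∧ ∀ M' : G.Subgraph, M'.IsMatching → M ≤ M' → M' = M := by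
  obtain ⟨M, -, hM, hmax⟩ :=
    Finite.exists_le_maximal (p := IsMatching) (a := (⊥ : G.Subgraph)) fun _ hv => hv.elim
  exact ⟨M, hM, fun M' hM' hle => le_antisymm (hmax hM' hle) hle⟩

theorem IsMatching.mem_verts_or_mem_verts_of_maximal (hM : M.IsMatching)
    (hmax : ∀ M' : G.Subgraph, M'.IsMatching → M ≤ M' → M' = M) {x y : V} (hxy : G.Adj x y) :
    x ∈ M.verts ∨ y ∈ M.verts := by
  by_contra! hxy_free
  have hdisj : Disjoint M.support (G.subgraphOfAdj hxy).support := by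
    rw [hM.support_eq_verts, support_subgraphOfAdj, Set.disjoint_right]
    rintro _ (rfl | rfl)
    exacts [hxy_free.1, hxy_free.2]
  have hsup := hmax _ (hM.sup (IsMatching.subgraphOfAdj hxy) hdisj) le_sup_left
  have hadj : (M ⊔ G.subgraphOfAdj hxy).Adj x y := sup_adj.mpr (Or.inr (by simp))
  exact hxy_free.1 (hsup ▸ hadj).fst_mem

theorem IsMatching.ncard_edgeSet_eq_ncard_inter_verts {U : Set V}
    (hU : ∀ ⦃x y⦄, G.Adj x y → (x ∈ U ↔ y ∉ U)) (hM : M.IsMatching) :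
    M.edgeSet.ncard = (U ∩ M.verts).ncard := by
  symm
  refine Set.ncard_congr (fun x hx => s(x, (hM hx.2).choose))
    (fun x hx => (hM hx.2).choose_spec.1) ?_ ?_
  · intro x y hx hy hxy
    rcases Sym2.eq_iff.mp hxy with ⟨rfl, -⟩ | ⟨rfl, -⟩
    · rfl
    · exact absurd hx.1 ((hU (M.adj_sub (hM hy.2).choose_spec.1)).mp hy.1)
  · intro e he
    induction e with
    | h x y =>
      have hxy : M.Adj x y := he
      by_cases hx : x ∈ U
      · exact ⟨x, ⟨hx, hxy.fst_mem⟩, by rw [← (hM hxy.fst_mem).choose_spec.2 y hxy]⟩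
      · have hy : y ∈ U := not_not.mp (mt (hU (M.adj_sub hxy)).mpr hx)
        refine ⟨y, ⟨hy, hxy.snd_mem⟩, ?_⟩
        rw [← (hM hxy.snd_mem).choose_spec.2 x hxy.symm, Sym2.eq_swap]

/-- In a disjoint union of stars with centres `U`, a maximal matching covers exactly the
non-isolated centres. -/
theorem IsMatching.inter_verts_eq_of_maximal {U : Set V}
    (hU : ∀ ⦃x y⦄, G.Adj x y → (x ∈ U ↔ y ∉ U))
    (hleaf : ∀ ⦃z y y'⦄, z ∉ U → G.Adj z y → G.Adj z y' → y = y') (hM : M.IsMatching)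
    (hmax : ∀ M' : G.Subgraph, M'.IsMatching → M ≤ M' → M' = M) :
    U ∩ M.verts = {u ∈ U | ∃ z, G.Adj u z} := by
  ext u
  refine ⟨fun ⟨hu, hu_mem⟩ => ⟨hu, ?_⟩, fun ⟨hu, z, huz⟩ => ⟨hu, ?_⟩⟩
  · obtain ⟨w, huw, -⟩ := hM hu_mem
    exact ⟨w, M.adj_sub huw⟩
  · refine (hM.mem_verts_or_mem_verts_of_maximal hmax huz).elim id fun hz => ?_
    obtain ⟨w, hzw, -⟩ := hM hz
    have hz_leaf : z ∉ U := (hU huz).mp hu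
    rw [hleaf hz_leaf (M.adj_sub hzw) huz.symm] at hzw
    exact hzw.snd_mem

end SimpleGraph.Subgraph

def IsOMvGadget {n : ℕ} (m v : Fin n → Bool) (G : SimpleGraph (Fin n × Fin 3)) : Prop :=
  ∀ x y : Fin n × Fin 3, G.Adj x y ↔
    (∃ j : Fin n, v j = true ∧ ((x = (j, 0) ∧ y = (j, 1)) ∨ (x = (j, 1) ∧ y = (j, 0)))) ∨
    (∃ j : Fin n, m j = true ∧ ((x = (j, 1) ∧ y = (j, 2)) ∨ (x = (j, 2) ∧ y = (j, 1))))

namespace IsOMvGadget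

variable {n : ℕ} {m v : Fin n → Bool} {G : SimpleGraph (Fin n × Fin 3)} {x y : Fin n × Fin 3}

theorem snd_eq_one_iff_of_adj (hG : IsOMvGadget m v G) (hxy : G.Adj x y) :
    x.2 = 1 ↔ y.2 ≠ 1 := by
  rcases (hG x y).mp hxy with ⟨j, -, ⟨rfl, rfl⟩ | ⟨rfl, rfl⟩⟩ | ⟨j, -, ⟨rfl, rfl⟩ | ⟨rfl, rfl⟩⟩ <;>
    simp

theorem eq_of_adj_of_snd_ne_one (hG : IsOMvGadget m v G) (hx : x.2 ≠ 1) (hxy : G.Adj x y) :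
    y = (x.1, 1) := by
  rcases (hG x y).mp hxy with ⟨j, -, ⟨rfl, rfl⟩ | ⟨rfl, rfl⟩⟩ | ⟨j, -, ⟨rfl, rfl⟩ | ⟨rfl, rfl⟩⟩ <;>
    first | rfl | exact absurd rfl hx

theorem exists_adj_iff (hG : IsOMvGadget m v G) (j : Fin n) :
    (∃ z, G.Adj (j, 1) z) ↔ v j = true ∨ m j = true := by
  constructor
  · rintro ⟨z, hz⟩
    rcases (hG _ _).mp hz with ⟨j', hv, ⟨h, -⟩ | ⟨h, -⟩⟩ | ⟨j', hm, ⟨h, -⟩ | ⟨h, -⟩⟩ <;>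
      simp_all [Prod.ext_iff]
  · rintro (hv | hm)
    · exact ⟨(j, 0), (hG _ _).mpr (Or.inl ⟨j, hv, Or.inr ⟨rfl, rfl⟩⟩)⟩
    · exact ⟨(j, 2), (hG _ _).mpr (Or.inr ⟨j, hm, Or.inl ⟨rfl, rfl⟩⟩)⟩

theorem ncard_edgeSet_of_maximal (hG : IsOMvGadget m v G) {M : G.Subgraph} (hM : M.IsMatching)
    (hmax : ∀ M' : G.Subgraph, M'.IsMatching → M ≤ M' → M' = M) :
    M.edgeSet.ncard = {j : Fin n | v j = true ∨ m j = true}.ncard := by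
  have hU : ∀ ⦃x y⦄, G.Adj x y → (x ∈ {x | x.2 = 1} ↔ y ∉ {x | x.2 = 1}) :=
    fun _ _ => hG.snd_eq_one_iff_of_adj
  have hleaf : ∀ ⦃z y y'⦄, z ∉ {x | x.2 = 1} → G.Adj z y → G.Adj z y' → y = y' :=
    fun _ _ _ hz hy hy' => (hG.eq_of_adj_of_snd_ne_one hz hy).trans
      (hG.eq_of_adj_of_snd_ne_one hz hy').symm
  have hcentres : {u ∈ {x : Fin n × Fin 3 | x.2 = 1} | ∃ z, G.Adj u z} =
      (fun j => (j, 1)) '' {j | v j = true ∨ m j = true} := by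
    ext ⟨j, k⟩
    constructor
    · rintro ⟨rfl, hadj⟩
      exact ⟨j, (hG.exists_adj_iff j).mp hadj, rfl⟩
    · rintro ⟨j, hj, hjk⟩
      cases hjk
      exact ⟨rfl, (hG.exists_adj_iff j).mpr hj⟩
  rw [hM.ncard_edgeSet_eq_ncard_inter_verts hU, hM.inter_verts_eq_of_maximal hU hleaf hmax,
    hcentres, Set.ncard_image_of_injective _ fun _ _ h => congrArg Prod.fst h]

end IsOMvGadget

/-- OMv gadget for fully retroactive maximal matching: on vertex set `Fin n × Fin 3` with
`a j = (j,0)`, `u j = (j,1)`, `b j = (j,2)`, where `a j` is adjacent to `u j` iff `v j = true`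
and `u j` is adjacent to `b j` iff `m j = true` (and there are no other edges), every maximal
matching has exactly `|{j | v j}| + |{j | m j}| - |{j | v j ∧ m j}|` edges; in particular every
maximal matching has exactly `|{j | v j}| + |{j | m j}|` edges iff the boolean inner product of
`m` and `v` is `0`. -/
theorem omv_maximal_matching_gadget (n : ℕ) (m v : Fin n → Bool)
    (G : SimpleGraph (Fin n × Fin 3))
    (hG : ∀ x y : Fin n × Fin 3, G.Adj x y ↔
      (∃ j : Fin n, v j = true ∧
        ((x = (j, 0) ∧ y = (j, 1)) ∨ (x = (j, 1) ∧ y = (j, 0)))) ∨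
      (∃ j : Fin n, m j = true ∧
        ((x = (j, 1) ∧ y = (j, 2)) ∨ (x = (j, 2) ∧ y = (j, 1))))) :
    (∀ M : G.Subgraph, M.IsMatching →
      (∀ M' : G.Subgraph, M'.IsMatching → M ≤ M' → M' = M) →
      M.edgeSet.ncard =
        {j : Fin n | v j = true}.ncard + {j : Fin n | m j = true}.ncard -
          {j : Fin n | v j = true ∧ m j = true}.ncard) ∧
    ((∀ M : G.Subgraph, M.IsMatching →
      (∀ M' : G.Subgraph, M'.IsMatching → M ≤ M' → M' = M) →
      M.edgeSet.ncard = {j : Fin n | v j = true}.ncard + {j : Fin n | m j = true}.ncard) ↔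
      ∀ j : Fin n, ¬(v j = true ∧ m j = true)) := by
  have hgadget : IsOMvGadget m v G := hG
  have hincl_excl : {j : Fin n | v j = true ∨ m j = true}.ncard +
      {j : Fin n | v j = true ∧ m j = true}.ncard =
      {j : Fin n | v j = true}.ncard + {j : Fin n | m j = true}.ncard :=
    Set.ncard_union_add_ncard_inter _ _
  refine ⟨fun M hM hmax => by rw [hgadget.ncard_edgeSet_of_maximal hM hmax]; omega,
    fun hall j hj => ?_, fun hdisj M hM hmax => ?_⟩
  · obtain ⟨M, hM, hmax⟩ := SimpleGraph.Subgraph.exists_isMatching_maximal (G := G)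
    have hinter : {j : Fin n | v j = true ∧ m j = true}.ncard = 0 := by
      have := hgadget.ncard_edgeSet_of_maximal hM hmax
      have := hall M hM hmax
      omega
    exact ((Set.ncard_eq_zero).mp hinter).subset hj
  · have hinter : {j : Fin n | v j = true ∧ m j = true} = ∅ :=
      Set.eq_empty_of_forall_notMem hdisj
    rw [hgadget.ncard_edgeSet_of_maximal hM hmax, ← hincl_excl, hinter, Set.ncard_empty,
      Nat.add_zero]
end

section
/- Fix n ∈ ℕ and boolean vectors m, v : Fin n → Bool. Let G be the simple graph on the vertex type Fin n × Fin 4, writing a_j = (j,0), u_j = (j,1), b_j = (j,2), c_j = (j,3), with adjacency given by: c_j is adjacent to a_j and to b_j for every j; a_j is adjacent to u_j iff v j = false; u_j is adjacent to b_j iff m j = false; and there are no other edges. Then G has a perfect matching if and only if there is no j : Fin n with v j = true and m j = true. -/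
/-!
If `v j` and `m j` both hold, `u j = (j, 1)` has no neighbour, so no perfect matching exists.
Otherwise every block `{a j, u j, b j, c j}` is covered by two of its edges: `a j – c j` and
`u j – b j` when `v j` holds (then `m j` fails), and `a j – u j`, `b j – c j` when it does not.
These pairs form a fixed-point-free involution along the edges, i.e. a perfect matching.
-/

namespace SimpleGraph

variable {V : Type*} {G : SimpleGraph V}

theorem Subgraph.IsPerfectMatching.exists_adj {M : G.Subgraph} (hM : M.IsPerfectMatching)
    (x : V) : ∃ y, G.Adj x y :=
  let ⟨y, hxy, _⟩ := Subgraph.isPerfectMatching_iff.mp hM x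
  ⟨y, M.adj_sub hxy⟩

theorem exists_isPerfectMatching_of_involutive {f : V → V} (hf : Function.Involutive f)
    (hadj : ∀ x, G.Adj x (f x)) : ∃ M : G.Subgraph, M.IsPerfectMatching := by
  let M : G.Subgraph :=
    { verts := Set.univ
      Adj := fun x y => f x = y
      adj_sub := by rintro x _ rfl; exact hadj x
      edge_vert := fun _ => Set.mem_univ _
      symm := ⟨by rintro x _ rfl; exact hf x⟩ }
  exact ⟨M, Subgraph.isPerfectMatching_iff.mpr fun x => ⟨f x, rfl, fun _ hy => Eq.symm hy⟩⟩

end SimpleGraph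

namespace OMvGadget

variable {n : ℕ}

def Adj (m v : Fin n → Bool) (x y : Fin n × Fin 4) : Prop :=
  (∃ j : Fin n, (x = (j, 3) ∧ y = (j, 0)) ∨ (x = (j, 0) ∧ y = (j, 3))) ∨
  (∃ j : Fin n, (x = (j, 3) ∧ y = (j, 2)) ∨ (x = (j, 2) ∧ y = (j, 3))) ∨
  (∃ j : Fin n, v j = false ∧ ((x = (j, 0) ∧ y = (j, 1)) ∨ (x = (j, 1) ∧ y = (j, 0)))) ∨
  (∃ j : Fin n, m j = false ∧ ((x = (j, 1) ∧ y = (j, 2)) ∨ (x = (j, 2) ∧ y = (j, 1))))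

theorem not_adj_u {m v : Fin n → Bool} {j : Fin n} (hv : v j = true) (hm : m j = true)
    (y : Fin n × Fin 4) : ¬Adj m v (j, 1) y := by
  simp [Adj, Prod.ext_iff, hv, hm]

def partner (v : Fin n → Bool) (x : Fin n × Fin 4) : Fin n × Fin 4 :=
  (x.1, if v x.1 then x.2.rev else ![1, 0, 3, 2] x.2)

theorem partner_involutive (v : Fin n → Bool) : Function.Involutive (partner v) := by
  rintro ⟨j, i⟩
  cases hv : v j <;> fin_cases i <;> simp [partner, hv]

theorem adj_partner {m v : Fin n → Bool} (h : ∀ j, ¬(v j = true ∧ m j = true))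
    (x : Fin n × Fin 4) : Adj m v x (partner v x) := by
  obtain ⟨j, i⟩ := x
  cases hv : v j
  · fin_cases i <;> simp [Adj, partner, hv]
  · have hm : m j = false := by simpa [hv] using h j
    fin_cases i <;> simp [Adj, partner, hv, hm]

end OMvGadget

/-- OMv gadget for the existence of a perfect matching: on vertex set `Fin n × Fin 4` with
`a j = (j,0)`, `u j = (j,1)`, `b j = (j,2)`, `c j = (j,3)`, where `c j` is adjacent to `a j`
and to `b j` for every `j`, `a j` is adjacent to `u j` iff `v j = false`, `u j` is adjacent to
`b j` iff `m j = false`, and there are no other edges. The graph has a perfect matching iff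
the boolean inner product of `m` and `v` is `0`. -/
theorem omv_perfect_matching_gadget (n : ℕ) (m v : Fin n → Bool)
    (G : SimpleGraph (Fin n × Fin 4))
    (hG : ∀ x y : Fin n × Fin 4, G.Adj x y ↔
      (∃ j : Fin n, (x = (j, 3) ∧ y = (j, 0)) ∨ (x = (j, 0) ∧ y = (j, 3))) ∨
      (∃ j : Fin n, (x = (j, 3) ∧ y = (j, 2)) ∨ (x = (j, 2) ∧ y = (j, 3))) ∨
      (∃ j : Fin n, v j = false ∧
        ((x = (j, 0) ∧ y = (j, 1)) ∨ (x = (j, 1) ∧ y = (j, 0)))) ∨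
      (∃ j : Fin n, m j = false ∧
        ((x = (j, 1) ∧ y = (j, 2)) ∨ (x = (j, 2) ∧ y = (j, 1))))) :
    (∃ M : G.Subgraph, M.IsPerfectMatching) ↔
      ∀ j : Fin n, ¬(v j = true ∧ m j = true) := by
  change ∀ x y, G.Adj x y ↔ OMvGadget.Adj m v x y at hG
  constructor
  · rintro ⟨M, hM⟩ j ⟨hv, hm⟩
    obtain ⟨y, hy⟩ := hM.exists_adj (j, 1)
    exact OMvGadget.not_adj_u hv hm y ((hG _ _).mp hy)
  · intro h
    exact SimpleGraph.exists_isPerfectMatching_of_involutive (OMvGadget.partner_involutive v)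
      fun x => (hG _ _).mpr (OMvGadget.adj_partner h x)
end

section
/- Fix n ∈ ℕ and boolean vectors m, v : Fin n → Bool. Let G be the simple graph on the vertex type Fin n × Fin 3, writing a_j = (j,0), u_j = (j,1), b_j = (j,2), with adjacency given by: a_j is adjacent to b_j for every j; a_j is adjacent to u_j iff v j = true; u_j is adjacent to b_j iff m j = true; and there are no other edges. Then G contains three pairwise adjacent vertices (a triangle) if and only if there exists j : Fin n with v j = true and m j = true. In particular, if such j exists then there is a set S of 3 vertices with 3 edges of G inside S, so the maximum subgraph density of G is at least 1. -/
/-- OMv gadget for maximum density, positive side: on vertex set `Fin n × Fin 3` with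
`a j = (j,0)`, `u j = (j,1)`, `b j = (j,2)`, where `a j` is adjacent to `b j` for every `j`,
`a j` is adjacent to `u j` iff `v j = true`, `u j` is adjacent to `b j` iff `m j = true`,
and there are no other edges. The graph contains three pairwise adjacent vertices iff the
boolean inner product of `m` and `v` is `1`; in that case there is a set `S` of `3` vertices
with `3` edges of `G` inside `S`. -/
theorem omv_density_gadget_triangle (n : ℕ) (m v : Fin n → Bool)
    (G : SimpleGraph (Fin n × Fin 3))
    (hG : ∀ x y : Fin n × Fin 3, G.Adj x y ↔
      (∃ j : Fin n, (x = (j, 0) ∧ y = (j, 2)) ∨ (x = (j, 2) ∧ y = (j, 0))) ∨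
      (∃ j : Fin n, v j = true ∧
        ((x = (j, 0) ∧ y = (j, 1)) ∨ (x = (j, 1) ∧ y = (j, 0)))) ∨
      (∃ j : Fin n, m j = true ∧
        ((x = (j, 1) ∧ y = (j, 2)) ∨ (x = (j, 2) ∧ y = (j, 1))))) :
    ((∃ x y z : Fin n × Fin 3, G.Adj x y ∧ G.Adj y z ∧ G.Adj x z) ↔
      ∃ j : Fin n, v j = true ∧ m j = true) ∧
    ((∃ j : Fin n, v j = true ∧ m j = true) →
      ∃ S : Finset (Fin n × Fin 3), S.card = 3 ∧
        {e ∈ G.edgeSet | ∀ x ∈ e, x ∈ S}.ncard = 3) := by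
  constructor
  · constructor
    · rintro ⟨x, y, z, hxy, hyz, hxz⟩
      rw [hG] at hxy hyz hxz
      clear hG
      rcases hxy with ⟨j, ⟨rfl, rfl⟩ | ⟨rfl, rfl⟩⟩ | ⟨j, hv, ⟨rfl, rfl⟩ | ⟨rfl, rfl⟩⟩ |
        ⟨j, hm, ⟨rfl, rfl⟩ | ⟨rfl, rfl⟩⟩ <;>
      rcases hyz with ⟨k, ⟨h1, h2⟩ | ⟨h1, h2⟩⟩ | ⟨k, hv2, ⟨h1, h2⟩ | ⟨h1, h2⟩⟩ |
        ⟨k, hm2, ⟨h1, h2⟩ | ⟨h1, h2⟩⟩ <;>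
      rcases hxz with ⟨l, ⟨g1, g2⟩ | ⟨g1, g2⟩⟩ | ⟨l, hv3, ⟨g1, g2⟩ | ⟨g1, g2⟩⟩ |
        ⟨l, hm3, ⟨g1, g2⟩ | ⟨g1, g2⟩⟩ <;>
      simp_all [Prod.ext_iff] <;>
      exact ⟨j, by simp_all, by simp_all⟩
    · rintro ⟨j, hv, hm⟩
      exact ⟨(j, 0), (j, 1), (j, 2),
        (hG _ _).mpr (Or.inr (Or.inl ⟨j, hv, Or.inl ⟨rfl, rfl⟩⟩)),
        (hG _ _).mpr (Or.inr (Or.inr ⟨j, hm, Or.inl ⟨rfl, rfl⟩⟩)),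
        (hG _ _).mpr (Or.inl ⟨j, Or.inl ⟨rfl, rfl⟩⟩)⟩
  · rintro ⟨j, hv, hm⟩
    refine ⟨{(j, 0), (j, 1), (j, 2)}, ?_, ?_⟩
    · simp [Prod.ext_iff]
    · have hset : {e ∈ G.edgeSet |
          ∀ x ∈ e, x ∈ ({(j, 0), (j, 1), (j, 2)} : Finset (Fin n × Fin 3))}
          = ↑({s((j, 0), (j, 2)), s((j, 0), (j, 1)), s((j, 1), (j, 2))} :
              Finset (Sym2 (Fin n × Fin 3))) := by
        ext e
        induction e using Sym2.ind with
        | _ x y =>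
          simp only [Set.mem_setOf_eq, SimpleGraph.mem_edgeSet, hG, Sym2.mem_iff,
            Finset.coe_insert, Finset.coe_singleton, Set.mem_insert_iff, Set.mem_singleton_iff,
            Finset.mem_insert, Finset.mem_singleton, Sym2.eq, Sym2.rel_iff', Prod.mk.injEq,
            Prod.swap_prod_mk]
          clear hG
          constructor
          · rintro ⟨⟨k, ⟨rfl, rfl⟩ | ⟨rfl, rfl⟩⟩ | ⟨k, _, ⟨rfl, rfl⟩ | ⟨rfl, rfl⟩⟩ |
              ⟨k, _, ⟨rfl, rfl⟩ | ⟨rfl, rfl⟩⟩, hmem⟩ <;>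
            · have := hmem (k, _) (Or.inl rfl)
              simp_all [Prod.ext_iff]
          · intro h
            constructor
            · rcases h with (⟨h1, h2⟩ | ⟨h1, h2⟩) | (⟨h1, h2⟩ | ⟨h1, h2⟩) |
                (⟨h1, h2⟩ | ⟨h1, h2⟩) <;> subst h1 <;> subst h2 <;>
              first
                | exact Or.inl ⟨j, Or.inl ⟨rfl, rfl⟩⟩
                | exact Or.inl ⟨j, Or.inr ⟨rfl, rfl⟩⟩
                | exact Or.inr (Or.inl ⟨j, hv, Or.inl ⟨rfl, rfl⟩⟩)
                | exact Or.inr (Or.inl ⟨j, hv, Or.inr ⟨rfl, rfl⟩⟩)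
                | exact Or.inr (Or.inr ⟨j, hm, Or.inl ⟨rfl, rfl⟩⟩)
                | exact Or.inr (Or.inr ⟨j, hm, Or.inr ⟨rfl, rfl⟩⟩)
            · rcases h with (⟨h1, h2⟩ | ⟨h1, h2⟩) | (⟨h1, h2⟩ | ⟨h1, h2⟩) |
                (⟨h1, h2⟩ | ⟨h1, h2⟩) <;> subst h1 <;> subst h2 <;> simp
      rw [hset, Set.ncard_coe_finset]
      simp [Prod.ext_iff]
end

section
/- Fix n ∈ ℕ and boolean vectors m, v : Fin n → Bool, and suppose that for every j : Fin n it is not the case that both v j = true and m j = true. Let G be the simple graph on the vertex type Fin n × Fin 3, writing a_j = (j,0), u_j = (j,1), b_j = (j,2), with adjacency given by: a_j is adjacent to b_j for every j; a_j is adjacent to u_j iff v j = true; u_j is adjacent to b_j iff m j = true; and there are no other edges. Then for every nonempty finite set S of vertices, 3·e(S) ≤ 2·|S|, where e(S) is the number of edges of G with both endpoints in S. (Hence the maximum subgraph density of G is at most 2/3.) -/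
private lemma omv_aux {α β : Type*} (F : Finset α) (T : Finset β)
    (e1 e2 : α) (hsub : ∀ e ∈ F, e = e1 ∨ e = e2)
    (hone : F.Nonempty → 2 ≤ T.card)
    (hboth : e1 ∈ F → e2 ∈ F → e1 ≠ e2 → 3 ≤ T.card) :
    3 * F.card ≤ 2 * T.card := by
  classical
  rcases F.eq_empty_or_nonempty with h | h
  · simp [h]
  have h2 := hone h
  have hsub' : F ⊆ {e1, e2} := fun e he => by
    rcases hsub e he with rfl | rfl <;> simp
  have hFle : F.card ≤ 2 :=
    (Finset.card_le_card hsub').trans ((Finset.card_insert_le _ _).trans (by simp))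
  rcases Nat.lt_or_ge F.card 2 with hF | hF
  · omega
  · obtain ⟨a, ha, b, hb, hab⟩ := Finset.one_lt_card.mp hF
    rcases hsub a ha with rfl | rfl <;> rcases hsub b hb with rfl | rfl
    · exact absurd rfl hab
    · have := hboth ha hb hab; omega
    · have := hboth hb ha (Ne.symm hab); omega
    · exact absurd rfl hab

/-- OMv gadget for maximum density, negative side: when the boolean inner product of `m` and
`v` is `0`, the gadget graph (with edges `a j - b j` for every `j`, `a j - u j` iff
`v j = true`, `u j - b j` iff `m j = true`, and no other edges) satisfies
`3 * e(S) ≤ 2 * |S|` for every nonempty vertex set `S`, where `e(S)` denotes the number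
of edges of `G` with both endpoints in `S`; hence its maximum subgraph density is at most
`2/3`. -/
theorem omv_density_gadget_sparse (n : ℕ) (m v : Fin n → Bool)
    (hmv : ∀ j : Fin n, ¬(v j = true ∧ m j = true))
    (G : SimpleGraph (Fin n × Fin 3))
    (hG : ∀ x y : Fin n × Fin 3, G.Adj x y ↔
      (∃ j : Fin n, (x = (j, 0) ∧ y = (j, 2)) ∨ (x = (j, 2) ∧ y = (j, 0))) ∨
      (∃ j : Fin n, v j = true ∧
        ((x = (j, 0) ∧ y = (j, 1)) ∨ (x = (j, 1) ∧ y = (j, 0)))) ∨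
      (∃ j : Fin n, m j = true ∧
        ((x = (j, 1) ∧ y = (j, 2)) ∨ (x = (j, 2) ∧ y = (j, 1))))) :
    ∀ S : Finset (Fin n × Fin 3), S.Nonempty →
      3 * {e ∈ G.edgeSet | ∀ x ∈ e, x ∈ S}.ncard ≤ 2 * S.card := by
  classical
  intro S _
  set A : Finset (Sym2 (Fin n × Fin 3)) :=
    Finset.univ.filter (fun e => e ∈ G.edgeSet ∧ ∀ x ∈ e, x ∈ S) with hAdef
  have hset : {e ∈ G.edgeSet | ∀ x ∈ e, x ∈ S} = ↑A := by
    ext e; simp [hAdef]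
  rw [hset, Set.ncard_coe_finset]
  -- structure of edges
  have key : ∀ e ∈ A, ∃ j : Fin n,
      e = s((j, 0), (j, 2)) ∨ (v j = true ∧ e = s((j, 0), (j, 1))) ∨
        (m j = true ∧ e = s((j, 1), (j, 2))) := by
    intro e he
    rw [hAdef, Finset.mem_filter] at he
    obtain ⟨-, hEdge, -⟩ := he
    induction e with
    | _ x y =>
      rw [SimpleGraph.mem_edgeSet, hG] at hEdge
      rcases hEdge with ⟨j, h | h⟩ | ⟨j, hv, h | h⟩ | ⟨j, hm, h | h⟩
      · exact ⟨j, Or.inl (by rw [h.1, h.2])⟩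
      · exact ⟨j, Or.inl (by rw [h.1, h.2, Sym2.eq_swap])⟩
      · exact ⟨j, Or.inr (Or.inl ⟨hv, by rw [h.1, h.2]⟩)⟩
      · exact ⟨j, Or.inr (Or.inl ⟨hv, by rw [h.1, h.2, Sym2.eq_swap]⟩)⟩
      · exact ⟨j, Or.inr (Or.inr ⟨hm, by rw [h.1, h.2]⟩)⟩
      · exact ⟨j, Or.inr (Or.inr ⟨hm, by rw [h.1, h.2, Sym2.eq_swap]⟩)⟩
  have perj : ∀ j : Fin n,
      3 * (A.filter fun e => e.out.1.1 = j).card ≤ 2 * (S.filter fun p => p.1 = j).card := by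
    intro j
    set F := A.filter fun e => e.out.1.1 = j with hFdef
    set T := S.filter fun p => p.1 = j with hTdef
    have hFsub : ∀ e ∈ F, e = s((j, 0), (j, 2)) ∨ (v j = true ∧ e = s((j, 0), (j, 1))) ∨
        (m j = true ∧ e = s((j, 1), (j, 2))) := by
      intro e he
      rw [hFdef, Finset.mem_filter] at he
      obtain ⟨j', hj'⟩ := key e he.1
      have hout : e.out.1 ∈ e := Sym2.out_fst_mem e
      have hj : e.out.1.1 = j' := by
        rcases hj' with h | ⟨_, h⟩ | ⟨_, h⟩ <;> subst h <;>
          rcases Sym2.mem_iff.mp hout with h' | h' <;> simp [h']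
      have : j' = j := hj.symm.trans he.2
      subst this
      exact hj'
    have hend : ∀ e ∈ F, ∀ x ∈ e, x ∈ T := by
      intro e he x hx
      have h1 : x ∈ S := by
        have hA := (Finset.mem_filter.mp he).1
        rw [hAdef, Finset.mem_filter] at hA
        exact hA.2.2 x hx
      have h2 : x.1 = j := by
        rcases hFsub e he with rfl | ⟨_, rfl⟩ | ⟨_, rfl⟩ <;>
          rcases Sym2.mem_iff.mp hx with rfl | rfl <;> rfl
      exact Finset.mem_filter.mpr ⟨h1, h2⟩
    have hone : F.Nonempty → 2 ≤ T.card := by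
      rintro ⟨e, he⟩
      have h02 : ∀ (p q : Fin n × Fin 3), e = s(p, q) → p ≠ q → 2 ≤ T.card := by
        rintro p q rfl hpq
        exact Finset.one_lt_card.mpr
          ⟨p, hend _ he _ (Sym2.mem_mk_left _ _), q, hend _ he _ (Sym2.mem_mk_right _ _), hpq⟩
      rcases hFsub e he with rfl | ⟨_, rfl⟩ | ⟨_, rfl⟩
      · exact h02 _ _ rfl (by simp)
      · exact h02 _ _ rfl (by simp)
      · exact h02 _ _ rfl (by simp)
    have hthree : (j, (0 : Fin 3)) ∈ T → (j, (1 : Fin 3)) ∈ T → (j, (2 : Fin 3)) ∈ T →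
        3 ≤ T.card := by
      intro h0 h1 h2
      have hsub3 : ({(j, 0), (j, 1), (j, 2)} : Finset (Fin n × Fin 3)) ⊆ T := by
        intro x hx
        simp only [Finset.mem_insert, Finset.mem_singleton] at hx
        rcases hx with rfl | rfl | rfl <;> assumption
      have hc : ({(j, 0), (j, 1), (j, 2)} : Finset (Fin n × Fin 3)).card = 3 := by
        rw [Finset.card_insert_of_notMem (by simp), Finset.card_pair (by simp)]
      calc 3 = ({(j, 0), (j, 1), (j, 2)} : Finset (Fin n × Fin 3)).card := hc.symm
        _ ≤ T.card := Finset.card_le_card hsub3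
    cases hv : v j <;> cases hm : m j
    · -- both false: only edge ab possible
      refine omv_aux F T s((j, 0), (j, 2)) s((j, 0), (j, 2)) ?_ hone
        (fun _ _ h => absurd rfl h)
      intro e he
      rcases hFsub e he with rfl | ⟨h, _⟩ | ⟨h, _⟩
      · exact Or.inl rfl
      · rw [hv] at h; exact absurd h (by simp)
      · rw [hm] at h; exact absurd h (by simp)
    · -- m true, v false: edges ab, ub
      refine omv_aux F T s((j, 0), (j, 2)) s((j, 1), (j, 2)) ?_ hone ?_
      · intro e he
        rcases hFsub e he with rfl | ⟨h, _⟩ | ⟨_, rfl⟩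
        · exact Or.inl rfl
        · rw [hv] at h; exact absurd h (by simp)
        · exact Or.inr rfl
      · intro h1 h2 _
        exact hthree (hend _ h1 _ (Sym2.mem_mk_left _ _))
          (hend _ h2 _ (Sym2.mem_mk_left _ _))
          (hend _ h1 _ (Sym2.mem_mk_right _ _))
    · -- v true, m false: edges ab, au
      refine omv_aux F T s((j, 0), (j, 2)) s((j, 0), (j, 1)) ?_ hone ?_
      · intro e he
        rcases hFsub e he with rfl | ⟨_, rfl⟩ | ⟨h, _⟩
        · exact Or.inl rfl
        · exact Or.inr rfl
        · rw [hm] at h; exact absurd h (by simp)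
      · intro h1 h2 _
        exact hthree (hend _ h1 _ (Sym2.mem_mk_left _ _))
          (hend _ h2 _ (Sym2.mem_mk_right _ _))
          (hend _ h1 _ (Sym2.mem_mk_right _ _))
    · exact absurd ⟨hv, hm⟩ (hmv j)
  have hA' : A.card = ∑ j : Fin n, (A.filter fun e => e.out.1.1 = j).card :=
    Finset.card_eq_sum_card_fiberwise (fun e _ => Finset.mem_univ _)
  have hS' : S.card = ∑ j : Fin n, (S.filter fun p => p.1 = j).card :=
    Finset.card_eq_sum_card_fiberwise (fun p _ => Finset.mem_univ _)
  calc 3 * A.card = ∑ j : Fin n, 3 * (A.filter fun e => e.out.1.1 = j).card := by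
        rw [hA', Finset.mul_sum]
    _ ≤ ∑ j : Fin n, 2 * (S.filter fun p => p.1 = j).card :=
        Finset.sum_le_sum fun j _ => perj j
    _ = 2 * S.card := by rw [hS', Finset.mul_sum]
end

section
/- Fix n ≥ 1, a natural number i with 1 ≤ i ≤ n, and a boolean matrix m : ℕ → ZMod n → Bool. Let G be the simple graph on the vertex type (ZMod n) ⊕ (ZMod n), writing u_j = inl j and b_l = inr l, where u_j is adjacent to b_l if and only if there exists a natural number s with 1 ≤ s ≤ i such that either (2 ≤ s and l = j + (s − 2) in ZMod n and m (s−1) j = false) or (l = j + (s − 1) in ZMod n and m s j = true); there are no other edges. Then for every j : ZMod n, the degree of u_j in G equals i − 1 if m i j = false and equals i if m i j = true. -/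
/-- Stage `i` of the incremental hardness construction for maximum degree: on vertex set
`(ZMod n) ⊕ (ZMod n)` with `u j = .inl j` and `b l = .inr l`, the vertex `u j` is adjacent
to `b l` iff there is a stage `s` with `1 ≤ s ≤ i` such that either (`2 ≤ s`,
`l = j + (s - 2)` and `m (s-1) j = false`) or (`l = j + (s - 1)` and `m s j = true`).
Then the degree of `u j` is `i - 1` if `m i j = false` and `i` if `m i j = true`. -/
theorem incremental_max_degree_gadget_rows (n : ℕ) (hn : 1 ≤ n)
    (i : ℕ) (hi1 : 1 ≤ i) (hin : i ≤ n) (m : ℕ → ZMod n → Bool)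
    (G : SimpleGraph (ZMod n ⊕ ZMod n))
    (hG : ∀ x y : ZMod n ⊕ ZMod n, G.Adj x y ↔
      ∃ j l : ZMod n,
        ((x = Sum.inl j ∧ y = Sum.inr l) ∨ (x = Sum.inr l ∧ y = Sum.inl j)) ∧
        ∃ s : ℕ, 1 ≤ s ∧ s ≤ i ∧
          ((2 ≤ s ∧ l = j + ((s - 2 : ℕ) : ZMod n) ∧ m (s - 1) j = false) ∨
           (l = j + ((s - 1 : ℕ) : ZMod n) ∧ m s j = true))) :
    ∀ j : ZMod n,
      (G.neighborSet (Sum.inl j)).ncard = if m i j = true then i else i - 1 := by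
  intro j
  haveI : NeZero n := ⟨by omega⟩
  set k := if m i j = true then i else i - 1 with hk
  have hki : k ≤ i := by rw [hk]; split <;> omega
  have hset : G.neighborSet (Sum.inl j) =
      ↑((Finset.range k).image (fun t : ℕ => (Sum.inr (j + (t : ZMod n)) : ZMod n ⊕ ZMod n))) := by
    ext y
    simp only [SimpleGraph.mem_neighborSet, hG, Finset.coe_image, Set.mem_image,
      Finset.mem_coe, Finset.mem_range]
    constructor
    · rintro ⟨j', l, h1, s, hs1, hsi, hcase⟩
      rcases h1 with ⟨hj', hy⟩ | ⟨habs, -⟩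
      swap
      · exact absurd habs (by simp)
      · have hjj : j = j' := by injection hj'
        subst hjj
        rcases hcase with ⟨hs2, hl, hmf⟩ | ⟨hl, hmt⟩
        · refine ⟨s - 2, ?_, by rw [hy, hl]⟩
          rw [hk]
          have : ¬ (i = 1) := by omega
          split <;> omega
        · refine ⟨s - 1, ?_, by rw [hy, hl]⟩
          by_cases hsei : s = i
          · subst hsei
            rw [hk]
            simp [hmt]
            omega
          · rw [hk]; split <;> omega
    · rintro ⟨t, ht, rfl⟩
      refine ⟨j, j + (t : ZMod n), Or.inl ⟨rfl, rfl⟩, ?_⟩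
      by_cases hmt : m (t + 1) j = true
      · exact ⟨t + 1, by omega, by omega, Or.inr ⟨by simp, hmt⟩⟩
      · have hmf : m (t + 1) j = false := by simpa using hmt
        have hti : t + 2 ≤ i := by
          by_contra h
          have hti' : t = i - 1 := by omega
          have : m i j = false := by rw [← hmf]; congr 1; omega
          rw [hk] at ht
          rw [this] at ht
          simp at ht
          omega
        exact ⟨t + 2, by omega, hti, Or.inl ⟨by omega, by simp, by simpa using hmf⟩⟩
  rw [hset, Set.ncard_coe_finset, Finset.card_image_of_injOn, Finset.card_range]
  intro a ha b hb hab
  simp only [Finset.mem_coe, Finset.mem_range] at ha hb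
  have : (a : ZMod n) = (b : ZMod n) := by
    have := Sum.inr.inj hab
    exact add_left_cancel this
  have hval := congrArg ZMod.val this
  rwa [ZMod.val_cast_of_lt (by omega), ZMod.val_cast_of_lt (by omega)] at hval
end

section
/- Fix n ≥ 1, natural numbers i, j with 1 ≤ i ≤ n and 1 ≤ j ≤ n, and boolean matrices m, v : ℕ → ZMod n → Bool. Let G be the simple graph on the vertex type (ZMod n) ⊕ (ZMod n) ⊕ (ZMod n), writing a_l, u_k, b_l for the vertices of the three copies, with adjacency given by: u_k is adjacent to b_l iff (l = k + s in ZMod n for some natural s with s ≤ j − 2) or (l = k + (j − 1) in ZMod n and m j k = true); u_k is adjacent to a_l iff (l = k + s in ZMod n for some natural s with s ≤ i − 2) or (l = k + (i − 1) in ZMod n and v i k = true); and there are no other edges. Then the maximum degree of G is at most i + j, and it equals i + j if and only if there exists k : ZMod n with m j k = true and v i k = true. -/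
/-- State of the incremental hardness construction for maximum degree after the first `j`
rows of the matrix `m` and the first `i` input vectors of `v` have been processed: on vertex
set `(ZMod n) ⊕ (ZMod n) ⊕ (ZMod n)` (the copies `A`, `U`, `B`), `u k` is adjacent to `b l`
iff (`l = k + s` for some natural `s ≤ j - 2`, i.e. `s + 2 ≤ j`) or (`l = k + (j-1)` and
`m j k = true`); `u k` is adjacent to `a l` iff (`l = k + s` for some natural `s ≤ i - 2`,
i.e. `s + 2 ≤ i`) or (`l = k + (i-1)` and `v i k = true`); there are no other edges.
Then the maximum degree of `G` is at most `i + j`, with equality iff there is `k` with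
`m j k = true` and `v i k = true`. -/
theorem incremental_max_degree_gadget (n : ℕ) (hn : 1 ≤ n)
    (i j : ℕ) (hi1 : 1 ≤ i) (hin : i ≤ n) (hj1 : 1 ≤ j) (hjn : j ≤ n)
    (m v : ℕ → ZMod n → Bool)
    (G : SimpleGraph (ZMod n ⊕ ZMod n ⊕ ZMod n))
    (hG : ∀ x y : ZMod n ⊕ ZMod n ⊕ ZMod n, G.Adj x y ↔
      (∃ k l : ZMod n,
        ((x = Sum.inr (Sum.inl k) ∧ y = Sum.inr (Sum.inr l)) ∨
         (x = Sum.inr (Sum.inr l) ∧ y = Sum.inr (Sum.inl k))) ∧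
        ((∃ s : ℕ, s + 2 ≤ j ∧ l = k + (s : ZMod n)) ∨
         (l = k + ((j - 1 : ℕ) : ZMod n) ∧ m j k = true))) ∨
      (∃ k l : ZMod n,
        ((x = Sum.inr (Sum.inl k) ∧ y = Sum.inl l) ∨
         (x = Sum.inl l ∧ y = Sum.inr (Sum.inl k))) ∧
        ((∃ s : ℕ, s + 2 ≤ i ∧ l = k + (s : ZMod n)) ∨
         (l = k + ((i - 1 : ℕ) : ZMod n) ∧ v i k = true)))) :
    haveI : NeZero n := ⟨by omega⟩
    letI : DecidableRel G.Adj := Classical.decRel _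
    G.maxDegree ≤ i + j ∧
      (G.maxDegree = i + j ↔ ∃ k : ZMod n, m j k = true ∧ v i k = true) := by
  haveI : NeZero n := ⟨by omega⟩
  letI : DecidableRel G.Adj := Classical.decRel _
  have castinj : ∀ a b : ℕ, a < n → b < n → ((a : ZMod n) = (b : ZMod n)) → a = b := by
    intro a b ha hb h
    have := congrArg ZMod.val h
    rwa [ZMod.val_natCast_of_lt ha, ZMod.val_natCast_of_lt hb] at this
  -- generic map
  set f : (a : ℕ) → (b : ℕ) → ZMod n → (Fin a ⊕ Fin b) → (ZMod n ⊕ ZMod n ⊕ ZMod n) :=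
    fun a b k p =>
      p.elim (fun s => Sum.inr (Sum.inr (k + (s.1 : ZMod n))))
             (fun s => Sum.inl (k + (s.1 : ZMod n))) with hf
  have hUsub : ∀ (k : ZMod n) (a b : ℕ),
      (∀ s : ℕ, s + 2 ≤ j → s < a) → (m j k = true → j - 1 < a) →
      (∀ s : ℕ, s + 2 ≤ i → s < b) → (v i k = true → i - 1 < b) →
      G.neighborFinset (Sum.inr (Sum.inl k)) ⊆ Finset.univ.image (f a b k) := by
    intro k a b h1 h2 h3 h4 y hy
    rw [SimpleGraph.mem_neighborFinset, hG] at hy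
    simp only [Finset.mem_image, Finset.mem_univ, true_and]
    rcases hy with ⟨k', l, hxy, hcond⟩ | ⟨k', l, hxy, hcond⟩
    · rcases hxy with ⟨hx, hy'⟩ | ⟨hx, hy'⟩
      · obtain rfl : k = k' := by simpa using hx
        subst hy'
        rcases hcond with ⟨s, hs, rfl⟩ | ⟨rfl, hmk⟩
        · exact ⟨Sum.inl ⟨s, h1 s hs⟩, rfl⟩
        · exact ⟨Sum.inl ⟨j - 1, h2 hmk⟩, rfl⟩
      · simp at hx
    · rcases hxy with ⟨hx, hy'⟩ | ⟨hx, hy'⟩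
      · obtain rfl : k = k' := by simpa using hx
        subst hy'
        rcases hcond with ⟨s, hs, rfl⟩ | ⟨rfl, hvk⟩
        · exact ⟨Sum.inr ⟨s, h3 s hs⟩, rfl⟩
        · exact ⟨Sum.inr ⟨i - 1, h4 hvk⟩, rfl⟩
      · simp at hx
  have cardim : ∀ (a b : ℕ) (k : ZMod n), (Finset.univ.image (f a b k)).card ≤ a + b := by
    intro a b k
    calc (Finset.univ.image (f a b k)).card ≤ (Finset.univ : Finset (Fin a ⊕ Fin b)).card :=
          Finset.card_image_le
      _ = a + b := by simp
  have hdegU : ∀ k : ZMod n, G.degree (Sum.inr (Sum.inl k)) ≤ i + j := by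
    intro k
    have := Finset.card_le_card (hUsub k j i (fun s hs => by omega) (fun _ => by omega)
      (fun s hs => by omega) (fun _ => by omega))
    have := le_trans this (cardim j i k)
    rw [SimpleGraph.degree]
    omega
  have hdegA : ∀ l : ZMod n, G.degree (Sum.inl l) ≤ i := by
    intro l
    have hsub : G.neighborFinset (Sum.inl l) ⊆
        Finset.univ.image (fun s : Fin i => (Sum.inr (Sum.inl (l - (s.1 : ZMod n))) :
          ZMod n ⊕ ZMod n ⊕ ZMod n)) := by
      intro y hy
      rw [SimpleGraph.mem_neighborFinset, hG] at hy
      simp only [Finset.mem_image, Finset.mem_univ, true_and]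
      rcases hy with ⟨k', l', hxy, hcond⟩ | ⟨k', l', hxy, hcond⟩
      · rcases hxy with ⟨hx, _⟩ | ⟨hx, _⟩ <;> simp at hx
      · rcases hxy with ⟨hx, _⟩ | ⟨hx, hy'⟩
        · simp at hx
        · obtain rfl : l = l' := by simpa using hx
          subst hy'
          rcases hcond with ⟨s, hs, hl⟩ | ⟨hl, _⟩
          · exact ⟨⟨s, by omega⟩, by rw [hl]; simp⟩
          · exact ⟨⟨i - 1, by omega⟩, by rw [hl]; simp⟩
    have h2 : (Finset.univ.image (fun s : Fin i => (Sum.inr (Sum.inl (l - (s.1 : ZMod n))) :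
        ZMod n ⊕ ZMod n ⊕ ZMod n))).card ≤ i := le_trans Finset.card_image_le (by simp)
    have := le_trans (Finset.card_le_card hsub) h2
    rw [SimpleGraph.degree]
    exact this
  have hdegB : ∀ l : ZMod n, G.degree (Sum.inr (Sum.inr l)) ≤ j := by
    intro l
    have hsub : G.neighborFinset (Sum.inr (Sum.inr l)) ⊆
        Finset.univ.image (fun s : Fin j => (Sum.inr (Sum.inl (l - (s.1 : ZMod n))) :
          ZMod n ⊕ ZMod n ⊕ ZMod n)) := by
      intro y hy
      rw [SimpleGraph.mem_neighborFinset, hG] at hy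
      simp only [Finset.mem_image, Finset.mem_univ, true_and]
      rcases hy with ⟨k', l', hxy, hcond⟩ | ⟨k', l', hxy, hcond⟩
      · rcases hxy with ⟨hx, _⟩ | ⟨hx, hy'⟩
        · simp at hx
        · obtain rfl : l = l' := by simpa using hx
          subst hy'
          rcases hcond with ⟨s, hs, hl⟩ | ⟨hl, _⟩
          · exact ⟨⟨s, by omega⟩, by rw [hl]; simp⟩
          · exact ⟨⟨j - 1, by omega⟩, by rw [hl]; simp⟩
      · rcases hxy with ⟨hx, _⟩ | ⟨hx, _⟩ <;> simp at hx
    have h2 : (Finset.univ.image (fun s : Fin j => (Sum.inr (Sum.inl (l - (s.1 : ZMod n))) :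
        ZMod n ⊕ ZMod n ⊕ ZMod n))).card ≤ j := le_trans Finset.card_image_le (by simp)
    have := le_trans (Finset.card_le_card hsub) h2
    rw [SimpleGraph.degree]
    exact this
  have hmax : G.maxDegree ≤ i + j := by
    apply SimpleGraph.maxDegree_le_of_forall_degree_le
    intro x
    rcases x with l | k | l
    · exact le_trans (hdegA l) (by omega)
    · exact hdegU k
    · exact le_trans (hdegB l) (by omega)
  refine ⟨hmax, ?_, ?_⟩
  · -- maxDegree = i + j → ∃ k
    intro hmd
    obtain ⟨x, hx⟩ := G.exists_maximal_degree_vertex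
    rcases x with l | k | l
    · have := hdegA l; omega
    · refine ⟨k, ?_, ?_⟩
      · by_contra hfalse
        have hm : m j k ≠ true := hfalse
        have hsub := hUsub k (j - 1) i (fun s hs => by omega) (fun h => absurd h hm)
          (fun s hs => by omega) (fun _ => by omega)
        have := le_trans (Finset.card_le_card hsub) (cardim (j - 1) i k)
        rw [SimpleGraph.degree] at hx
        omega
      · by_contra hfalse
        have hv : v i k ≠ true := hfalse
        have hsub := hUsub k j (i - 1) (fun s hs => by omega) (fun _ => by omega)
          (fun s hs => by omega) (fun h => absurd h hv)
        have := le_trans (Finset.card_le_card hsub) (cardim j (i - 1) k)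
        rw [SimpleGraph.degree] at hx
        omega
    · have := hdegB l; omega
  · -- ∃ k → maxDegree = i + j
    rintro ⟨k, hmk, hvk⟩
    have hfinj : Function.Injective (f j i k) := by
      intro p q h
      rcases p with s | s <;> rcases q with t | t <;>
        simp only [hf, Sum.elim_inl, Sum.elim_inr] at h
      · have h2 : (s.1 : ZMod n) = (t.1 : ZMod n) := by
          have := Sum.inr.inj (Sum.inr.inj h)
          exact add_left_cancel this
        exact congrArg Sum.inl (Fin.ext (castinj _ _ (lt_of_lt_of_le s.2 hjn)
          (lt_of_lt_of_le t.2 hjn) h2))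
      · exact absurd h (by simp)
      · exact absurd h (by simp)
      · have h2 : (s.1 : ZMod n) = (t.1 : ZMod n) := by
          have := Sum.inl.inj h
          exact add_left_cancel this
        exact congrArg Sum.inr (Fin.ext (castinj _ _ (lt_of_lt_of_le s.2 hin)
          (lt_of_lt_of_le t.2 hin) h2))
    have hsup : Finset.univ.image (f j i k) ⊆ G.neighborFinset (Sum.inr (Sum.inl k)) := by
      intro y hy
      simp only [Finset.mem_image, Finset.mem_univ, true_and] at hy
      obtain ⟨p, rfl⟩ := hy
      rw [SimpleGraph.mem_neighborFinset, hG]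
      rcases p with s | s
      · left
        refine ⟨k, k + (s.1 : ZMod n), Or.inl ⟨rfl, rfl⟩, ?_⟩
        by_cases hs : s.1 + 2 ≤ j
        · exact Or.inl ⟨s.1, hs, rfl⟩
        · right
          have hsj : s.1 = j - 1 := by have := s.2; omega
          exact ⟨by rw [hsj], hmk⟩
      · right
        refine ⟨k, k + (s.1 : ZMod n), Or.inl ⟨rfl, rfl⟩, ?_⟩
        by_cases hs : s.1 + 2 ≤ i
        · exact Or.inl ⟨s.1, hs, rfl⟩
        · right
          have hsi : s.1 = i - 1 := by have := s.2; omega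
          exact ⟨by rw [hsi], hvk⟩
    have heq : G.neighborFinset (Sum.inr (Sum.inl k)) = Finset.univ.image (f j i k) :=
      Finset.Subset.antisymm (hUsub k j i (fun s hs => by omega) (fun _ => by omega)
        (fun s hs => by omega) (fun _ => by omega)) hsup
    have hdeg : G.degree (Sum.inr (Sum.inl k)) = i + j := by
      rw [SimpleGraph.degree, heq, Finset.card_image_of_injective _ hfinj]
      simp
      omega
    have := G.degree_le_maxDegree (Sum.inr (Sum.inl k))
    omega
end
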